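/- Let (V, ⟨·,·⟩, A) be a Jacobi–Ricci commuting model with Ricci operator ρ = 2a₁·id + 2a₂·J, where J : V → V is self-adjoint, J² = −id, and A(Jx,y,z,w) = A(x,Jy,z,w) = A(x,y,Jz,w) = A(x,y,z,Jw) for all x, y, z, w. Let V₊ be a subspace on which ⟨·,·⟩ is positive definite such that V = V₊ ⊕ JV₊ and ⟨V₊, JV₊⟩ = 0, and let g be the restriction of ⟨·,·⟩ to V₊. Define A₁(x,y,z,w) := A(x,y,z,w) and A₂(x,y,z,w) := −A(Jx,y,z,w) for x, y, z, w ∈ V₊. Then A₁ and A₂ are algebraic curvature tensors on V₊ which are Einstein on (V₊, g) with Einstein constants a₁ and a₂ respectively: for every orthonormal basis {e_k} of (V₊, g), Σ_k A₁(x, e_k, e_k, y) = a₁·g(x, y) and Σ_k A₂(x, e_k, e_k, y) = a₂·g(x, y) for all x, y ∈ V₊. -/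

import Mathlib

/-
Pick a `g`-orthonormal basis `e_k` of `V₊`. Then `e_k, J e_k` is a basis of `V` in which
`⟨·,·⟩` is diagonal with entries `1` and `-1`, and since `A (J e) y z (J e) = -A e y z e`,
the trace defining the Ricci form counts every `J e_k` with the same sign as `e_k`:
`⟨ρ x, y⟩ = 2 ∑ₖ A (x, e_k, e_k, y)`. Evaluating `ρ = 2a₁ + 2a₂ J` at `x` and at `J x` and using
`⟨J V₊, V₊⟩ = 0` gives the two Einstein identities. `A₂` is an algebraic curvature tensor
because `J` can be moved freely between the slots of `A`.
-/

open TensorProduct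

/-- `f : W⁴ → ℝ` is multilinear over `ℝ` in each of its four slots. -/
def IsML {W : Type*} [AddCommGroup W] [Module ℝ W] (f : W → W → W → W → ℝ) : Prop :=
  (∀ x x' y z w, f (x + x') y z w = f x y z w + f x' y z w) ∧
  (∀ (c : ℝ) x y z w, f (c • x) y z w = c * f x y z w) ∧
  (∀ x y y' z w, f x (y + y') z w = f x y z w + f x y' z w) ∧
  (∀ (c : ℝ) x y z w, f x (c • y) z w = c * f x y z w) ∧
  (∀ x y z z' w, f x y (z + z') w = f x y z w + f x y z' w) ∧
  (∀ (c : ℝ) x y z w, f x y (c • z) w = c * f x y z w) ∧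
  (∀ x y z w w', f x y z (w + w') = f x y z w + f x y z w') ∧
  (∀ (c : ℝ) x y z w, f x y z (c • w) = c * f x y z w)

/-- The symmetries of the Riemann curvature tensor. -/
def IsCurvSym {W : Type*} [AddCommGroup W] [Module ℝ W] (f : W → W → W → W → ℝ) : Prop :=
  (∀ x y z w, f x y z w = - f y x z w) ∧
  (∀ x y z w, f x y z w = f z w x y) ∧
  (∀ x y z w, f x y z w + f y z x w + f z x y w = 0)

/-- An algebraic curvature tensor: a multilinear map with the curvature symmetries. -/
def IsACT {W : Type*} [AddCommGroup W] [Module ℝ W] (f : W → W → W → W → ℝ) : Prop :=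
  IsML f ∧ IsCurvSym f

/-- The defining value of `⟨ρ x, y⟩`: the trace of `z ↦ ½𝓡(z,x)y + ½𝓡(z,y)x`,
where `R` is the (curried) curvature operator. -/
noncomputable def ricciForm {V : Type*} [AddCommGroup V] [Module ℝ V]
    (R : V →ₗ[ℝ] V →ₗ[ℝ] V →ₗ[ℝ] V) (x y : V) : ℝ :=
  LinearMap.trace ℝ V
    (((1 : ℝ) / 2) • ((R.flip x).flip y) + ((1 : ℝ) / 2) • ((R.flip y).flip x))

/-- The Jacobi--Ricci commuting identity of Lemma 1 (3). -/
def JRComm {V : Type*} [AddCommGroup V] [Module ℝ V]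
    (A : V → V → V → V → ℝ) (ρ : V →ₗ[ℝ] V) : Prop :=
  ∀ v₁ v₂ v₃ v₄ : V,
    A (ρ v₁) v₂ v₃ v₄ = A v₁ (ρ v₂) v₃ v₄ ∧
    A v₁ (ρ v₂) v₃ v₄ = A v₁ v₂ (ρ v₃) v₄ ∧
    A v₁ v₂ (ρ v₃) v₄ = A v₁ v₂ v₃ (ρ v₄)

open Module

namespace IsACT

variable {W W' : Type*} [AddCommGroup W] [Module ℝ W] [AddCommGroup W'] [Module ℝ W']
  {A : W → W → W → W → ℝ}

theorem comp_linearMap (hA : IsACT A) (f : W' →ₗ[ℝ] W) :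
    IsACT (fun x y z w => A (f x) (f y) (f z) (f w)) := by
  obtain ⟨⟨h₁, h₂, h₃, h₄, h₅, h₆, h₇, h₈⟩, s₁, s₂, s₃⟩ := hA
  refine ⟨⟨?_, ?_, ?_, ?_, ?_, ?_, ?_, ?_⟩, fun _ _ _ _ => s₁ .., fun _ _ _ _ => s₂ ..,
    fun _ _ _ _ => s₃ ..⟩ <;> intros <;>
    simp only [map_add, map_smul, h₁, h₂, h₃, h₄, h₅, h₆, h₇, h₈]

theorem neg (hA : IsACT A) : IsACT (fun x y z w => -A x y z w) := by
  obtain ⟨⟨h₁, h₂, h₃, h₄, h₅, h₆, h₇, h₈⟩, s₁, s₂, s₃⟩ := hA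
  refine ⟨?_, fun x y z w => ?_, fun x y z w => ?_, fun x y z w => ?_⟩
  · refine ⟨?_, ?_, ?_, ?_, ?_, ?_, ?_, ?_⟩ <;> intros <;>
      simp only [h₁, h₂, h₃, h₄, h₅, h₆, h₇, h₈] <;> ring
  all_goals linarith [s₁ x y z w, s₂ x y z w, s₃ x y z w]

theorem comp_first (hA : IsACT A) (J : W →ₗ[ℝ] W)
    (hJ₁₂ : ∀ x y z w, A (J x) y z w = A x (J y) z w)
    (hJ₁₄ : ∀ x y z w, A (J x) y z w = A x y z (J w)) :
    IsACT (fun x y z w => A (J x) y z w) := by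
  obtain ⟨⟨h₁, h₂, h₃, h₄, h₅, h₆, h₇, h₈⟩, s₁, s₂, s₃⟩ := hA
  refine ⟨⟨?_, ?_, ?_, ?_, ?_, ?_, ?_, ?_⟩, fun x y z w => ?_, fun x y z w => ?_,
    fun x y z w => ?_⟩
  any_goals intros; simp only [map_add, map_smul, h₁, h₂, h₃, h₄, h₅, h₆, h₇, h₈]
  · rw [hJ₁₂, s₁]
  · rw [hJ₁₄, s₂, hJ₁₂]
  · simp only [hJ₁₄, s₃]

end IsACT

theorem IsML.apply_neg_fourth {W : Type*} [AddCommGroup W] [Module ℝ W]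
    {A : W → W → W → W → ℝ} (hA : IsML A) (x y z w : W) : A x y z (-w) = -A x y z w := by
  rw [← neg_one_smul ℝ w, hA.2.2.2.2.2.2.2, neg_one_mul]

theorem IsCurvSym.ricci_symm {W : Type*} [AddCommGroup W] [Module ℝ W]
    {A : W → W → W → W → ℝ} (hA : IsCurvSym A) (x y e : W) : A x e e y = A y e e x := by
  obtain ⟨s₁, s₂, s₃⟩ := hA
  linarith [s₃ x e e y, s₃ y e e x, s₁ e e x y, s₁ e e y x, s₂ e x e y]

section DiagonalGram

variable {V ι : Type*} [AddCommGroup V] [Module ℝ V] [Fintype ι] [DecidableEq ι]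
  {B : LinearMap.BilinForm ℝ V} {b : Basis ι ℝ V} {ε : ι → ℝ}

theorem Module.Basis.repr_eq_mul_of_gram_diag
    (hgram : ∀ i j, B (b i) (b j) = if i = j then ε i else 0) (hε : ∀ i, ε i * ε i = 1)
    (x : V) (i : ι) : b.repr x i = ε i * B x (b i) := by
  have h : B x (b i) = b.repr x i * ε i := by
    conv_lhs => rw [← b.sum_repr x]
    simp only [map_sum, map_smul, LinearMap.sum_apply, LinearMap.smul_apply, hgram, smul_eq_mul,
      mul_ite, mul_zero, Finset.sum_ite_eq', Finset.mem_univ, if_true]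
  rw [h, mul_comm (b.repr x i), ← mul_assoc, hε, one_mul]

theorem LinearMap.trace_eq_sum_of_gram_diag
    (hgram : ∀ i j, B (b i) (b j) = if i = j then ε i else 0) (hε : ∀ i, ε i * ε i = 1)
    (T : V →ₗ[ℝ] V) : LinearMap.trace ℝ V T = ∑ i, ε i * B (T (b i)) (b i) := by
  rw [LinearMap.trace_eq_matrix_trace ℝ b T, Matrix.trace]
  simp only [Matrix.diag, LinearMap.toMatrix_apply]
  exact Finset.sum_congr rfl fun i _ => b.repr_eq_mul_of_gram_diag hgram hε _ i

end DiagonalGram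

theorem Module.Basis.exists_sum_elim_of_isCompl {R M ι κ : Type*} [Ring R] [AddCommGroup M]
    [Module R M] {p q : Submodule R M} (h : IsCompl p q) (bp : Basis ι R p) (bq : Basis κ R q) :
    ∃ b : Basis (ι ⊕ κ) R M, ⇑b = Sum.elim (fun i => (bp i : M)) (fun k => (bq k : M)) :=
  ⟨(bp.prod bq).map (Submodule.prodEquivOfIsCompl p q h), by ext (i | k) <;> simp⟩

section SplitBasis

variable {V ι : Type*} [AddCommGroup V] [Module ℝ V] [Fintype ι] [DecidableEq ι]
  {B : LinearMap.BilinForm ℝ V} {J : V →ₗ[ℝ] V} {P : Submodule ℝ V}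

theorem LinearMap.trace_eq_sum_sub_sum_of_isCompl_map
    (hBsymm : ∀ x y, B x y = B y x) (hJsa : ∀ x y, B (J x) y = B x (J y))
    (hJJ : ∀ x, J (J x) = -x) (hcompl : IsCompl P (P.map J))
    (horth : ∀ v ∈ P, ∀ w ∈ P, B v (J w) = 0)
    (b : Basis ι ℝ P) (hb : ∀ i j, B (b i) (b j) = if i = j then 1 else 0) (T : V →ₗ[ℝ] V) :
    LinearMap.trace ℝ V T =
      ∑ k, B (T (b k)) (b k) - ∑ k, B (T (J (b k))) (J (b k)) := by
  have hJinj : Function.Injective J := fun x y h => by simpa [hJJ] using congrArg J h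
  obtain ⟨bb, hbb⟩ :=
    Basis.exists_sum_elim_of_isCompl hcompl b (b.map (P.equivMapOfInjective J hJinj))
  let ε : ι ⊕ ι → ℝ := Sum.elim (fun _ => 1) (fun _ => -1)
  have hgram : ∀ i j, B (bb i) (bb j) = if i = j then ε i else 0 := by
    rintro (i | i) (j | j)
    all_goals simp only [hbb, ε, Sum.elim_inl, Sum.elim_inr, Basis.map_apply, Sum.inl.injEq,
      Sum.inr.injEq, reduceCtorEq, if_false, Submodule.coe_equivMapOfInjective_apply]
    · exact hb i j
    · exact horth _ (b i).2 _ (b j).2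
    · rw [hBsymm]; exact horth _ (b j).2 _ (b i).2
    · rw [hJsa, hJJ, map_neg, hb]; split_ifs <;> norm_num
  rw [LinearMap.trace_eq_sum_of_gram_diag hgram (by rintro (i | i) <;> norm_num [ε]),
    Fintype.sum_sum_type]
  simp [hbb, ε, sub_eq_add_neg]

end SplitBasis

theorem ricciForm_eq_two_mul_sum {V ι : Type*} [AddCommGroup V] [Module ℝ V] [Fintype ι]
    [DecidableEq ι] {B : LinearMap.BilinForm ℝ V} {A : V → V → V → V → ℝ}
    {R : V →ₗ[ℝ] V →ₗ[ℝ] V →ₗ[ℝ] V} {J : V →ₗ[ℝ] V} {P : Submodule ℝ V}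
    (hBsymm : ∀ x y, B x y = B y x) (hA : IsACT A)
    (hR : ∀ x y z w, B (R x y z) w = A x y z w)
    (hJsa : ∀ x y, B (J x) y = B x (J y)) (hJJ : ∀ x, J (J x) = -x)
    (hJ₁₄ : ∀ x y z w, A (J x) y z w = A x y z (J w))
    (hcompl : IsCompl P (P.map J)) (horth : ∀ v ∈ P, ∀ w ∈ P, B v (J w) = 0)
    (b : Basis ι ℝ P) (hb : ∀ i j, B (b i) (b j) = if i = j then 1 else 0) (u y : V) :
    ricciForm R u y = 2 * ∑ k, A u (b k) (b k) y := by
  have htrace (p q : V) :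
      LinearMap.trace ℝ V ((R.flip p).flip q) = 2 * ∑ k, A (b k) p q (b k) := by
    rw [LinearMap.trace_eq_sum_sub_sum_of_isCompl_map hBsymm hJsa hJJ hcompl horth b hb]
    simp only [LinearMap.flip_apply, hR, hJ₁₄, hJJ, hA.1.apply_neg_fourth, Finset.sum_neg_distrib]
    ring
  have hpair (p q e : V) : A e p q e = A q e e p := hA.2.2.1 ..
  rw [ricciForm, map_add, map_smul, map_smul, htrace, htrace]
  simp only [hpair, hA.2.ricci_symm y u, smul_eq_mul]
  ring

theorem statement15_general
    {V : Type*} [AddCommGroup V] [Module ℝ V]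
    (B : LinearMap.BilinForm ℝ V)
    (hBsymm : ∀ x y, B x y = B y x)
    (A : V → V → V → V → ℝ) (hA : IsACT A)
    (R : V →ₗ[ℝ] V →ₗ[ℝ] V →ₗ[ℝ] V)
    (hR : ∀ x y z w, B (R x y z) w = A x y z w)
    (ρ : V →ₗ[ℝ] V)
    (hρ : ∀ x y, B (ρ x) y = ricciForm R x y)
    (a₁ a₂ : ℝ) (J : V →ₗ[ℝ] V)
    (hρeq : ρ = (2 * a₁) • LinearMap.id + (2 * a₂) • J)
    (hJsa : ∀ x y, B (J x) y = B x (J y))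
    (hJ2 : J ∘ₗ J = - LinearMap.id)
    (hAJ : ∀ x y z w : V,
      A (J x) y z w = A x (J y) z w ∧
      A x (J y) z w = A x y (J z) w ∧
      A x y (J z) w = A x y z (J w))
    (Vplus : Submodule ℝ V)
    (hcompl : IsCompl Vplus (Vplus.map J))
    (horth : ∀ v ∈ Vplus, ∀ w ∈ Vplus, B v (J w) = 0) :
    IsACT (fun v w x y : Vplus => A (v : V) (w : V) (x : V) (y : V)) ∧
    IsACT (fun v w x y : Vplus => -A (J (v : V)) (w : V) (x : V) (y : V)) ∧
    (∀ (n : ℕ) (b : Module.Basis (Fin n) ℝ Vplus),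
      (∀ i j, B ((b i : V)) ((b j : V)) = if i = j then 1 else 0) →
      ∀ x y : Vplus,
        (∑ k, A (x : V) ((b k : V)) ((b k : V)) (y : V)) = a₁ * B ((x : V)) ((y : V))) ∧
    (∀ (n : ℕ) (b : Module.Basis (Fin n) ℝ Vplus),
      (∀ i j, B ((b i : V)) ((b j : V)) = if i = j then 1 else 0) →
      ∀ x y : Vplus,
        (∑ k, -A (J (x : V)) ((b k : V)) ((b k : V)) (y : V)) =
          a₂ * B ((x : V)) ((y : V))) := by
  have hJ₁₄ (x y z w : V) : A (J x) y z w = A x y z (J w) :=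
    (hAJ x y z w).1.trans ((hAJ x y z w).2.1.trans (hAJ x y z w).2.2)
  have hJ_orth (x y : Vplus) : B (J x) y = 0 := by rw [hJsa]; exact horth _ x.2 _ y.2
  have hJJ (x : V) : J (J x) = -x := by simpa using LinearMap.congr_fun hJ2 x
  have hρ_apply (x y : V) : B (ρ x) y = 2 * a₁ * B x y + 2 * a₂ * B (J x) y := by
    simp [hρeq]
  refine ⟨hA.comp_linearMap Vplus.subtype,
    ((hA.comp_first J (fun x y z w => (hAJ x y z w).1) hJ₁₄).neg).comp_linearMap Vplus.subtype,
    fun n b hb x y => ?_, fun n b hb x y => ?_⟩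
  · have h := ricciForm_eq_two_mul_sum hBsymm hA hR hJsa hJJ hJ₁₄ hcompl horth b hb x y
    rw [← hρ, hρ_apply, hJ_orth] at h
    linarith
  · have h := ricciForm_eq_two_mul_sum hBsymm hA hR hJsa hJJ hJ₁₄ hcompl horth b hb (J x) y
    rw [← hρ, hρ_apply, hJ_orth, hJJ, map_neg, LinearMap.neg_apply] at h
    rw [Finset.sum_neg_distrib]
    linarith

theorem statement15
    {V : Type*} [AddCommGroup V] [Module ℝ V] [FiniteDimensional ℝ V]
    (B : LinearMap.BilinForm ℝ V)
    (hBsymm : ∀ x y, B x y = B y x)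
    (hBnondeg : ∀ x, (∀ y, B x y = 0) → x = 0)
    (A : V → V → V → V → ℝ) (hA : IsACT A)
    (R : V →ₗ[ℝ] V →ₗ[ℝ] V →ₗ[ℝ] V)
    (hR : ∀ x y z w, B (R x y z) w = A x y z w)
    (ρ : V →ₗ[ℝ] V)
    (hρ : ∀ x y, B (ρ x) y = ricciForm R x y)
    (hJR : JRComm A ρ)
    (a₁ a₂ : ℝ) (J : V →ₗ[ℝ] V)
    (hρeq : ρ = (2 * a₁) • LinearMap.id + (2 * a₂) • J)
    (hJsa : ∀ x y, B (J x) y = B x (J y))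
    (hJ2 : J ∘ₗ J = - LinearMap.id)
    (hAJ : ∀ x y z w : V,
      A (J x) y z w = A x (J y) z w ∧
      A x (J y) z w = A x y (J z) w ∧
      A x y (J z) w = A x y z (J w))
    (Vplus : Submodule ℝ V)
    (hpos : ∀ v ∈ Vplus, v ≠ 0 → 0 < B v v)
    (hcompl : IsCompl Vplus (Vplus.map J))
    (horth : ∀ v ∈ Vplus, ∀ w ∈ Vplus, B v (J w) = 0) :
    IsACT (fun v w x y : Vplus => A (v : V) (w : V) (x : V) (y : V)) ∧
    IsACT (fun v w x y : Vplus => -A (J (v : V)) (w : V) (x : V) (y : V)) ∧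
    (∀ (n : ℕ) (b : Module.Basis (Fin n) ℝ Vplus),
      (∀ i j, B ((b i : V)) ((b j : V)) = if i = j then 1 else 0) →
      ∀ x y : Vplus,
        (∑ k, A (x : V) ((b k : V)) ((b k : V)) (y : V)) = a₁ * B ((x : V)) ((y : V))) ∧
    (∀ (n : ℕ) (b : Module.Basis (Fin n) ℝ Vplus),
      (∀ i j, B ((b i : V)) ((b j : V)) = if i = j then 1 else 0) →
      ∀ x y : Vplus,
        (∑ k, -A (J (x : V)) ((b k : V)) ((b k : V)) (y : V)) =
          a₂ * B ((x : V)) ((y : V))) :=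
  statement15_general B hBsymm A hA R hR ρ hρ a₁ a₂ J hρeq hJsa hJ2 hAJ Vplus hcompl horth
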